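/- Divide-and-Intersect bound for the BEC with general list size: let P_e ∈ (0,1), ε ∈ (0,1), l ∈ ℕ and L = 2^l. If d_min > ln(P_e/8)/ln ε and μ_ε{y : |S_y| > L} > P_e, then μ_ε{y : |S_y| > 2L} ≥ (3/16) · (μ_ε{y : |S_y| > L})². -/
import Mathlib


/-- The product Bernoulli(ε) measure of a set of erasure patterns `y : Fin N → Bool`:
each coordinate is independently `true` (erased) with probability `ε`. -/
noncomputable def prodMeas {N : ℕ} (ε : ℝ) (S : Set (Fin N → Bool)) : ℝ :=
  ∑ y : Fin N → Bool,
    Set.indicator S (fun y => ∏ i, (if y i = true then ε else 1 - ε)) y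

/-- The support `I_u` of the codeword `uG`: the positions where `uG` equals 1. -/
def Iu {K N : ℕ} (G : Matrix (Fin K) (Fin N) (ZMod 2)) (u : Fin K → ZMod 2) :
    Finset (Fin N) :=
  Finset.univ.filter (fun i => Matrix.vecMul u G i = 1)

/-- `E_u`: the event that the message `u` is compatible with the received word,
i.e., every position of `I_u` is erased. -/
def Eu {K N : ℕ} (G : Matrix (Fin K) (Fin N) (ZMod 2)) (u : Fin K → ZMod 2) :
    Set (Fin N → Bool) :=
  {y | ∀ i ∈ Iu G u, y i = true}

/-- `S_y`: the set of messages compatible with the erasure pattern `y`,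
i.e., whose codeword vanishes on all non-erased positions. -/
def Sy {K N : ℕ} (G : Matrix (Fin K) (Fin N) (ZMod 2)) (y : Fin N → Bool) :
    Set (Fin K → ZMod 2) :=
  {u | ∀ i, y i = false → Matrix.vecMul u G i = 0}

/-! ### Auxiliary material: the weight function and basic properties of `prodMeas` -/

open Finset Module

noncomputable def wgt {N : ℕ} (ε : ℝ) (y : Fin N → Bool) : ℝ :=
  ∏ i, (if y i = true then ε else 1 - ε)

section basic
variable {N : ℕ} {ε : ℝ}

lemma wgt_nonneg (h0 : 0 ≤ ε) (h1 : ε ≤ 1) (y : Fin N → Bool) : 0 ≤ wgt ε y :=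
  Finset.prod_nonneg fun i _ => by split <;> linarith

lemma prodMeas_def (S : Set (Fin N → Bool)) :
    prodMeas ε S = ∑ y : Fin N → Bool, Set.indicator S (wgt ε) y := rfl

lemma prodMeas_mono (h0 : 0 ≤ ε) (h1 : ε ≤ 1) {S T : Set (Fin N → Bool)} (h : S ⊆ T) :
    prodMeas ε S ≤ prodMeas ε T := by
  refine Finset.sum_le_sum fun y _ => ?_
  exact Set.indicator_le_indicator_of_subset h (fun y => wgt_nonneg h0 h1 y) y

lemma prodMeas_nonneg (h0 : 0 ≤ ε) (h1 : ε ≤ 1) (S : Set (Fin N → Bool)) :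
    0 ≤ prodMeas ε S := by
  refine Finset.sum_nonneg fun y _ => Set.indicator_nonneg (fun y _ => wgt_nonneg h0 h1 y) y

lemma prodMeas_empty : prodMeas ε (∅ : Set (Fin N → Bool)) = 0 := by
  simp [prodMeas]

lemma prodMeas_union_le (h0 : 0 ≤ ε) (h1 : ε ≤ 1) (S T : Set (Fin N → Bool)) :
    prodMeas ε (S ∪ T) ≤ prodMeas ε S + prodMeas ε T := by
  rw [prodMeas_def, prodMeas_def, prodMeas_def, ← Finset.sum_add_distrib]
  refine Finset.sum_le_sum fun y _ => ?_
  classical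
  by_cases hS : y ∈ S
  · rw [Set.indicator_of_mem (Set.mem_union_left _ hS), Set.indicator_of_mem hS]
    have := Set.indicator_nonneg (fun y (_ : y ∈ T) => wgt_nonneg h0 h1 y) y
    linarith
  · by_cases hT : y ∈ T
    · rw [Set.indicator_of_mem (Set.mem_union_right _ hT), Set.indicator_of_notMem hS,
        Set.indicator_of_mem hT]
      linarith
    · rw [Set.indicator_of_notMem (fun h => h.elim hS hT), Set.indicator_of_notMem hS,
        Set.indicator_of_notMem hT]
      linarith

lemma prodMeas_cylinder (h0 : 0 ≤ ε) (h1 : ε ≤ 1) (I : Finset (Fin N)) :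
    prodMeas ε {y : Fin N → Bool | ∀ i ∈ I, y i = true} = ε ^ I.card := by
  classical
  have key : ∀ y : Fin N → Bool,
      Set.indicator {y : Fin N → Bool | ∀ i ∈ I, y i = true} (wgt ε) y
        = ∏ i, (if i ∈ I then (if y i = true then ε else 0)
            else (if y i = true then ε else 1 - ε)) := by
    intro y
    by_cases hy : y ∈ {y : Fin N → Bool | ∀ i ∈ I, y i = true}
    · rw [Set.indicator_of_mem hy]
      refine Finset.prod_congr rfl fun i _ => ?_
      by_cases hi : i ∈ I
      · simp [hi, hy i hi]
      · simp [hi]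
    · rw [Set.indicator_of_notMem hy]
      simp only [Set.mem_setOf_eq, not_forall] at hy
      obtain ⟨i, hi, hyi⟩ := hy
      refine (Finset.prod_eq_zero (Finset.mem_univ i) ?_).symm
      simp [hi, hyi]
  rw [prodMeas_def]
  simp_rw [key]
  set g : Fin N → Bool → ℝ := fun i b => (if i ∈ I then (if b = true then ε else 0)
            else (if b = true then ε else 1 - ε)) with hg
  have hfac := Finset.prod_univ_sum (fun _ : Fin N => (univ : Finset Bool)) g
  rw [Fintype.piFinset_univ] at hfac
  show (∑ x : Fin N → Bool, ∏ i, g i (x i)) = ε ^ I.card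
  rw [← hfac]
  have : ∀ i : Fin N, (∑ b : Bool, g i b) = if i ∈ I then ε else 1 := by
    intro i
    by_cases hi : i ∈ I <;> simp [hg, hi] <;> try ring
  simp_rw [this]
  rw [← Finset.prod_filter, Finset.filter_mem_eq_inter, Finset.univ_inter, Finset.prod_const]

lemma wgt_total : ∑ y : Fin N → Bool, wgt ε y = 1 := by
  set g : Fin N → Bool → ℝ := fun _ b => (if b = true then ε else 1 - ε) with hg
  have hfac := Finset.prod_univ_sum (fun _ : Fin N => (univ : Finset Bool)) g
  rw [Fintype.piFinset_univ] at hfac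
  have : ∑ y : Fin N → Bool, wgt ε y = ∑ y : Fin N → Bool, ∏ i, g i (y i) := rfl
  rw [this, ← hfac]
  have h1 : ∀ i : Fin N, (∑ b : Bool, g i b) = 1 := by intro i; simp [hg]
  rw [Finset.prod_congr rfl fun i _ => h1 i, Finset.prod_const_one]

lemma wgt_supermod (a b : Fin N → Bool) :
    wgt ε a * wgt ε b ≤ wgt ε (a ⊓ b) * wgt ε (a ⊔ b) := by
  unfold wgt
  rw [← Finset.prod_mul_distrib, ← Finset.prod_mul_distrib]
  refine le_of_eq (Finset.prod_congr rfl fun i _ => ?_)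
  have hinf : ∀ p q : Bool, (p ⊓ q) = (p && q) := by decide
  have hsup : ∀ p q : Bool, (p ⊔ q) = (p || q) := by decide
  have h1 : (a ⊓ b) i = (a i && b i) := by rw [Pi.inf_apply, hinf]
  have h2 : (a ⊔ b) i = (a i || b i) := by rw [Pi.sup_apply, hsup]
  rw [h1, h2]
  cases ha : a i <;> cases hb : b i <;> simp <;> try ring

/-- Harris' inequality: increasing events are positively correlated under the
product Bernoulli measure. -/
lemma prodMeas_harris (h0 : 0 ≤ ε) (h1 : ε ≤ 1) {C D : Set (Fin N → Bool)}
    (hC : IsUpperSet C) (hD : IsUpperSet D) :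
    prodMeas ε C * prodMeas ε D ≤ prodMeas ε (C ∩ D) := by
  classical
  rw [prodMeas_def, prodMeas_def, prodMeas_def]
  set f : (Fin N → Bool) → ℝ := fun y => if y ∈ C then 1 else 0 with hfdef
  set g : (Fin N → Bool) → ℝ := fun y => if y ∈ D then 1 else 0 with hgdef
  have hf0 : 0 ≤ f := fun y => by by_cases h : y ∈ C <;> simp [hfdef, h]
  have hg0 : 0 ≤ g := fun y => by by_cases h : y ∈ D <;> simp [hgdef, h]
  have hf : Monotone f := fun a b hab => by
    by_cases h : a ∈ C
    · simp [hfdef, h, hC hab h]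
    · by_cases h' : b ∈ C <;> simp [hfdef, h, h']
  have hg : Monotone g := fun a b hab => by
    by_cases h : a ∈ D
    · simp [hgdef, h, hD hab h]
    · by_cases h' : b ∈ D <;> simp [hgdef, h, h']
  have key := fkg (f := f) (g := g) (μ := wgt ε)
    (fun y => wgt_nonneg h0 h1 y) hf0 hg0 hf hg (fun a b => wgt_supermod a b)
  have e1 : ∀ y, wgt ε y * f y = Set.indicator C (wgt ε) y := by
    intro y; by_cases h : y ∈ C <;> simp [hfdef, h, Set.indicator_of_mem, Set.indicator_of_notMem]
  have e2 : ∀ y, wgt ε y * g y = Set.indicator D (wgt ε) y := by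
    intro y; by_cases h : y ∈ D <;> simp [hgdef, h, Set.indicator_of_mem, Set.indicator_of_notMem]
  have e3 : ∀ y, wgt ε y * (f y * g y) = Set.indicator (C ∩ D) (wgt ε) y := by
    intro y
    by_cases h : y ∈ C <;> by_cases h' : y ∈ D <;>
      simp [hfdef, hgdef, h, h', Set.indicator_of_mem, Set.indicator_of_notMem,
        Set.mem_inter_iff]
  simp_rw [e1, e2, e3, wgt_total, one_mul] at key
  exact key

end basic

/-! ### Auxiliary material: linear-algebraic facts about `Sy` -/

section linalg

variable {K N : ℕ} (G : Matrix (Fin K) (Fin N) (ZMod 2))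

noncomputable instance : Fintype (Submodule (ZMod 2) (Fin K → ZMod 2)) := by
  classical
  exact Fintype.ofInjective (fun V => (V : Set (Fin K → ZMod 2))) SetLike.coe_injective

/-- `Sy` as a submodule. -/
def SyM (y : Fin N → Bool) : Submodule (ZMod 2) (Fin K → ZMod 2) where
  carrier := Sy G y
  zero_mem' := by intro i _; rw [Matrix.zero_vecMul]; rfl
  add_mem' := by
    intro a b ha hb i hi
    rw [Matrix.add_vecMul]
    simp [ha i hi, hb i hi]
  smul_mem' := by
    intro c u hu i hi
    rw [Matrix.smul_vecMul]
    simp [hu i hi]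

lemma Sy_mono {y y' : Fin N → Bool} (h : y ≤ y') : Sy G y ⊆ Sy G y' := by
  intro u hu i hi
  refine hu i ?_
  cases hyi : y i
  · rfl
  · have := h i
    rw [hyi, hi] at this
    exact absurd this (by simp)

lemma Sy_ncard (y : Fin N → Bool) :
    (Sy G y).ncard = 2 ^ (finrank (ZMod 2) (SyM G y)) := by
  haveI : Fact (Nat.Prime 2) := ⟨by norm_num⟩
  haveI : Fintype (SyM G y) := Fintype.ofFinite _
  have : (Sy G y).ncard = Fintype.card (SyM G y) := by
    rw [← Nat.card_coe_set_eq, ← Nat.card_eq_fintype_card]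
    rfl
  rw [this, card_eq_pow_finrank (K := ZMod 2), ZMod.card]

lemma exists_sub (S : Submodule (ZMod 2) (Fin K → ZMod 2)) (k : ℕ)
    (hk : k ≤ finrank (ZMod 2) S) :
    ∃ W : Submodule (ZMod 2) (Fin K → ZMod 2), W ≤ S ∧ finrank (ZMod 2) W = k := by
  haveI : Fact (Nat.Prime 2) := ⟨by norm_num⟩
  have b := finBasis (ZMod 2) S
  set f : Fin k → (Fin K → ZMod 2) := fun i => (b (Fin.castLE hk i) : Fin K → ZMod 2) with hf
  have hli : LinearIndependent (ZMod 2) f := by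
    have h1 : LinearIndependent (ZMod 2) (fun i : Fin k => b (Fin.castLE hk i)) :=
      b.linearIndependent.comp _ (Fin.castLE_injective hk)
    have := h1.map' S.subtype (Submodule.ker_subtype S)
    exact this
  refine ⟨Submodule.span (ZMod 2) (Set.range f), ?_, ?_⟩
  · rw [Submodule.span_le]
    rintro x ⟨i, rfl⟩
    exact (b (Fin.castLE hk i)).2
  · rw [finrank_span_eq_card hli, Fintype.card_fin]

end linalg

/-! ### Auxiliary material: greedy splitting of a finite union -/

lemma exists_split {X ι : Type*} [DecidableEq ι] (m : Set X → ℝ)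
    (hempty : m ∅ = 0)
    (subadd : ∀ S T : Set X, m (S ∪ T) ≤ m S + m T)
    (s : Finset ι) (f : ι → Set X) (δ θ : ℝ) (hθ : 0 < θ)
    (hδ : ∀ i ∈ s, m (f i) ≤ δ)
    (hθ' : θ ≤ m (⋃ i ∈ s, f i)) :
    ∃ t ⊆ s, θ ≤ m (⋃ i ∈ t, f i) ∧ m (⋃ i ∈ t, f i) ≤ θ + δ := by
  classical
  set P := (s.powerset).filter (fun t => θ ≤ m (⋃ i ∈ t, f i)) with hP
  have hsP : s ∈ P := by
    rw [hP, Finset.mem_filter]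
    exact ⟨Finset.mem_powerset_self s, hθ'⟩
  obtain ⟨t, htP, htmin⟩ := P.exists_min_image Finset.card ⟨s, hsP⟩
  rw [hP, Finset.mem_filter, Finset.mem_powerset] at htP
  obtain ⟨hts, htθ⟩ := htP
  refine ⟨t, hts, htθ, ?_⟩
  have htne : t.Nonempty := by
    rcases Finset.eq_empty_or_nonempty t with rfl | h
    · exfalso
      rw [show (⋃ i ∈ (∅ : Finset ι), f i) = (∅ : Set X) by simp] at htθ
      rw [hempty] at htθ
      linarith
    · exact h
  obtain ⟨i, hi⟩ := htne
  set t' := t.erase i with ht'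
  have ht'card : t'.card < t.card := Finset.card_erase_lt_of_mem hi
  have ht'notP : t' ∉ P := fun h => absurd (htmin t' h) (by omega)
  have ht'θ : m (⋃ j ∈ t', f j) < θ := by
    by_contra h
    push_neg at h
    exact ht'notP (by
      rw [hP, Finset.mem_filter, Finset.mem_powerset]
      exact ⟨(Finset.erase_subset _ _).trans hts, h⟩)
  have hsplit : (⋃ j ∈ t, f j) = f i ∪ ⋃ j ∈ t', f j := by
    conv_lhs => rw [← Finset.insert_erase hi]
    rw [Finset.set_biUnion_insert]
  calc m (⋃ j ∈ t, f j) = m (f i ∪ ⋃ j ∈ t', f j) := by rw [hsplit]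
    _ ≤ m (f i) + m (⋃ j ∈ t', f j) := subadd _ _
    _ ≤ δ + θ := by
        have := hδ i (hts hi)
        linarith
    _ = θ + δ := by ring

/-! ### The main theorem -/

/-- Divide-and-Intersect bound for the BEC with general list size L = 2^l. -/
theorem DI_bound_BEC_general_list (K N : ℕ) (G : Matrix (Fin K) (Fin N) (ZMod 2))
    (ε : ℝ) (hε0 : 0 < ε) (hε1 : ε < 1) (Pe : ℝ) (hPe0 : 0 < Pe) (hPe1 : Pe < 1)
    (l : ℕ) (L : ℕ) (hL : L = 2 ^ l)
    (hdmin : ∀ u : Fin K → ZMod 2, u ≠ 0 →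
      Real.log (Pe / 8) / Real.log ε < ((Iu G u).card : ℝ))
    (hbig : prodMeas ε {y : Fin N → Bool | L < (Sy G y).ncard} > Pe) :
    prodMeas ε {y : Fin N → Bool | 2 * L < (Sy G y).ncard}
      ≥ 3 / 16 * (prodMeas ε {y : Fin N → Bool | L < (Sy G y).ncard}) ^ 2 := by
  classical
  haveI : Fact (Nat.Prime 2) := ⟨by norm_num⟩
  set A := {y : Fin N → Bool | L < (Sy G y).ncard} with hA
  set B := {y : Fin N → Bool | 2 * L < (Sy G y).ncard} with hB
  set a := prodMeas ε A with haa
  have ha_pos : 0 < a := lt_trans hPe0 hbig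
  -- the finite family of (l+1)-dimensional subspaces
  set 𝒮 : Finset (Submodule (ZMod 2) (Fin K → ZMod 2)) :=
    Finset.univ.filter (fun V => finrank (ZMod 2) V = l + 1) with h𝒮
  set AV : Submodule (ZMod 2) (Fin K → ZMod 2) → Set (Fin N → Bool) :=
    fun V => {y | (V : Set (Fin K → ZMod 2)) ⊆ Sy G y} with hAV
  -- A is the union of the events AV over 𝒮
  have hAeq : A = ⋃ V ∈ 𝒮, AV V := by
    ext y
    simp only [hA, Set.mem_setOf_eq, Set.mem_iUnion, exists_prop, h𝒮, Finset.mem_filter,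
      Finset.mem_univ, true_and, hAV]
    constructor
    · intro hy
      have hdim : l + 1 ≤ finrank (ZMod 2) (SyM G y) := by
        rw [Sy_ncard, hL] at hy
        exact Nat.pow_lt_pow_iff_right (by norm_num) |>.mp hy
      obtain ⟨W, hWle, hWrank⟩ := exists_sub (SyM G y) (l + 1) hdim
      exact ⟨W, hWrank, fun u hu => hWle hu⟩
    · rintro ⟨V, hVrank, hVsub⟩
      have hle : V ≤ SyM G y := fun u hu => hVsub hu
      have : l + 1 ≤ finrank (ZMod 2) (SyM G y) := hVrank ▸ Submodule.finrank_mono hle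
      rw [Sy_ncard, hL]
      calc 2 ^ l < 2 ^ (l + 1) := Nat.pow_lt_pow_right (by norm_num) (by omega)
        _ ≤ 2 ^ finrank (ZMod 2) (SyM G y) := Nat.pow_le_pow_right (by norm_num) this
  -- two distinct subspaces force the event B
  have hBsub : ∀ V ∈ 𝒮, ∀ W ∈ 𝒮, V ≠ W → AV V ∩ AV W ⊆ B := by
    intro V hV W hW hVW y hy
    rw [h𝒮, Finset.mem_filter] at hV hW
    have hVle : V ≤ SyM G y := fun u hu => hy.1 hu
    have hWle : W ≤ SyM G y := fun u hu => hy.2 hu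
    have hsup : V ⊔ W ≤ SyM G y := sup_le hVle hWle
    have hVlt : V < V ⊔ W := by
      rcases lt_or_eq_of_le (le_sup_left : V ≤ V ⊔ W) with h | h
      · exact h
      · exfalso
        have hWV : W ≤ V := h ▸ le_sup_right
        rcases lt_or_eq_of_le hWV with h' | h'
        · have := Submodule.finrank_lt_finrank_of_lt h'
          rw [hV.2, hW.2] at this
          omega
        · exact hVW (h'.symm)
    have hrank : l + 1 < finrank (ZMod 2) (V ⊔ W : Submodule (ZMod 2) (Fin K → ZMod 2)) := by
      have := Submodule.finrank_lt_finrank_of_lt hVlt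
      rwa [hV.2] at this
    have hrank2 : l + 2 ≤ finrank (ZMod 2) (SyM G y) :=
      le_trans hrank (Submodule.finrank_mono hsup)
    rw [hB, Set.mem_setOf_eq, Sy_ncard, hL]
    calc 2 * 2 ^ l = 2 ^ (l + 1) := by ring
      _ < 2 ^ (l + 2) := Nat.pow_lt_pow_right (by norm_num) (by omega)
      _ ≤ 2 ^ finrank (ZMod 2) (SyM G y) := Nat.pow_le_pow_right (by norm_num) hrank2
  -- each event AV is small
  have hsmall : ∀ V ∈ 𝒮, prodMeas ε (AV V) ≤ Pe / 8 := by
    intro V hV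
    rw [h𝒮, Finset.mem_filter] at hV
    have hpos : 0 < finrank (ZMod 2) V := by omega
    obtain ⟨x, hx⟩ := Module.finrank_pos_iff_exists_ne_zero.mp hpos
    set u : Fin K → ZMod 2 := (x : Fin K → ZMod 2) with hu
    have hune : u ≠ 0 := fun h => hx (Subtype.ext h)
    have hsub : AV V ⊆ {y : Fin N → Bool | ∀ i ∈ Iu G u, y i = true} := by
      intro y hy i hi
      have humem : u ∈ Sy G y := hy x.2
      rw [Iu, Finset.mem_filter] at hi
      cases hyi : y i
      · exfalso
        have := humem i hyi
        rw [hi.2] at this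
        exact one_ne_zero this
      · rfl
    have hcyl := prodMeas_cylinder (N := N) hε0.le hε1.le (Iu G u)
    have hlogε : Real.log ε < 0 := Real.log_neg hε0 hε1
    have hd := hdmin u hune
    have hstep : ((Iu G u).card : ℝ) * Real.log ε < Real.log (Pe / 8) := by
      rw [div_lt_iff_of_neg hlogε] at hd
      linarith
    have hεpow : ε ^ (Iu G u).card < Pe / 8 := by
      have hlt : Real.log (ε ^ (Iu G u).card) < Real.log (Pe / 8) := by
        rwa [Real.log_pow]
      have hεp : (0:ℝ) < ε ^ (Iu G u).card := pow_pos hε0 _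
      have hPe8 : (0:ℝ) < Pe / 8 := by linarith
      by_contra h
      push_neg at h
      have := Real.log_le_log_iff hPe8 hεp |>.mpr h
      linarith
    calc prodMeas ε (AV V) ≤ prodMeas ε {y : Fin N → Bool | ∀ i ∈ Iu G u, y i = true} :=
          prodMeas_mono hε0.le hε1.le hsub
      _ = ε ^ (Iu G u).card := hcyl
      _ ≤ Pe / 8 := hεpow.le
  -- upper-set property
  have hupper : ∀ (t : Finset (Submodule (ZMod 2) (Fin K → ZMod 2))),
      IsUpperSet (⋃ V ∈ t, AV V) := by
    intro t y y' hyy' hy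
    rw [Set.mem_iUnion₂] at hy ⊢
    obtain ⟨V, hVt, hyV⟩ := hy
    exact ⟨V, hVt, fun u hu => Sy_mono G hyy' (hyV hu)⟩
  -- greedy split
  have haunion : a = prodMeas ε (⋃ V ∈ 𝒮, AV V) := by rw [haa, hAeq]
  obtain ⟨t, hts, htlo, hthi⟩ := exists_split (prodMeas ε) prodMeas_empty
    (prodMeas_union_le hε0.le hε1.le) 𝒮 AV (Pe / 8) (3 * a / 8)
    (by linarith) hsmall (by rw [← haunion]; linarith)
  set C := ⋃ V ∈ t, AV V with hC
  set D := ⋃ V ∈ 𝒮 \ t, AV V with hD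
  have hCD : (⋃ V ∈ 𝒮, AV V) = C ∪ D := by
    rw [hC, hD, ← Finset.set_biUnion_union, Finset.union_sdiff_of_subset hts]
  have hDa : a - prodMeas ε C ≤ prodMeas ε D := by
    have : a ≤ prodMeas ε C + prodMeas ε D := by
      rw [haunion, hCD]
      exact prodMeas_union_le hε0.le hε1.le C D
    linarith
  have hDlo : a / 2 ≤ prodMeas ε D := by
    have : prodMeas ε C ≤ 3 * a / 8 + Pe / 8 := hthi
    have hPea : Pe ≤ a := hbig.le
    linarith
  -- C ∩ D ⊆ B
  have hCDB : C ∩ D ⊆ B := by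
    rintro y ⟨hyC, hyD⟩
    rw [hC, Set.mem_iUnion₂] at hyC
    rw [hD, Set.mem_iUnion₂] at hyD
    obtain ⟨V, hVt, hyV⟩ := hyC
    obtain ⟨W, hWt, hyW⟩ := hyD
    rw [Finset.mem_sdiff] at hWt
    exact hBsub V (hts hVt) W hWt.1 (fun h => hWt.2 (h ▸ hVt)) ⟨hyV, hyW⟩
  -- conclude via Harris
  have hHarris : prodMeas ε C * prodMeas ε D ≤ prodMeas ε (C ∩ D) :=
    prodMeas_harris hε0.le hε1.le (hupper t) (hupper (𝒮 \ t))
  have hfin : prodMeas ε (C ∩ D) ≤ prodMeas ε B :=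
    prodMeas_mono hε0.le hε1.le hCDB
  have hprod : 3 * a / 8 * (a / 2) ≤ prodMeas ε C * prodMeas ε D := by
    have h1 : (0:ℝ) ≤ 3 * a / 8 := by linarith
    have h2 : (0:ℝ) ≤ a / 2 := by linarith
    exact mul_le_mul htlo hDlo h2 (le_trans h1 htlo)
  have : 3 / 16 * a ^ 2 = 3 * a / 8 * (a / 2) := by ring
  rw [ge_iff_le, this]
  linarith
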